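/- For every positive real number x, the function F(x) = (x ln x − x)(J₀(x)² + J₁(x)²) satisfies F'(x) = ln(x)·J₀(x)² − (ln(x) − 2)·J₁(x)². Equivalently, for 0 < a < b, ∫_a^b ln(x) J₀(x)² dx = [(x ln x − x)(J₀(x)² + J₁(x)²)]_a^b + ∫_a^b (ln(x) − 2) J₁(x)² dx. -/

import Mathlib

/-! Differentiating the defining series termwise gives `J₀' = -J₁` and `J₁' = J₀ - J₁ / x`, so
`(J₀² + J₁²)' = -2 J₁² / x`. As `(x log x - x)' = log x`, the product rule yields the derivative
formula, and the integral identity is the fundamental theorem of calculus on `[a, b] ⊆ (0, ∞)`. -/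

open Real MeasureTheory intervalIntegral

noncomputable def besselJ (n : ℕ) (x : ℝ) : ℝ :=
  ∑' k : ℕ, (-1 : ℝ) ^ k / (Nat.factorial k * Nat.factorial (k + n)) * (x / 2) ^ (2 * k + n)

open scoped Nat

noncomputable def besselTerm (n k : ℕ) (x : ℝ) : ℝ :=
  (-1) ^ k / (k ! * (k + n)!) * (x / 2) ^ (2 * k + n)

-- At `k = n = 0` the exponent `2 * k + n - 1` truncates to `0`; the factor `2 * k + n` is `0` there.
noncomputable def besselTermDeriv (n k : ℕ) (x : ℝ) : ℝ :=
  (-1) ^ k / (k ! * (k + n)!) * ((2 * k + n : ℕ) * (x / 2) ^ (2 * k + n - 1) / 2)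

lemma besselJ_eq_tsum (n : ℕ) (x : ℝ) : besselJ n x = ∑' k, besselTerm n k x := rfl

lemma hasDerivAt_besselTerm (n k : ℕ) (x : ℝ) :
    HasDerivAt (besselTerm n k) (besselTermDeriv n k x) x := by
  have h := (((hasDerivAt_id x).div_const 2).pow (2 * k + n)).const_mul
    ((-1 : ℝ) ^ k / (k ! * (k + n)!))
  exact h.congr_deriv (by simp only [besselTermDeriv, id]; ring)

lemma abs_besselCoeff_mul_le (n k : ℕ) (c : ℝ) :
    |(-1) ^ k / (k ! * (k + n)! : ℝ) * c| ≤ |c| / k ! := by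
  have hk : (0 : ℝ) < k ! := mod_cast k.factorial_pos
  have hkn : (1 : ℝ) ≤ (k + n)! := mod_cast (k + n).factorial_pos
  rw [abs_mul, abs_div, abs_pow, abs_neg, abs_one, one_pow, abs_of_pos (by positivity),
    one_div_mul_eq_div]
  gcongr
  exact le_mul_of_one_le_right hk.le hkn

lemma abs_besselTerm_le {R x : ℝ} (hx : |x| ≤ R) (n k : ℕ) :
    |besselTerm n k x| ≤ R ^ (2 * k + n) / k ! := by
  refine (abs_besselCoeff_mul_le n k _).trans ?_
  gcongr
  rw [abs_pow, abs_div, abs_two]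
  gcongr
  linarith [abs_nonneg x]

lemma mul_half_pow_pred_div_two_le {r : ℝ} (hr : 0 ≤ r) (m : ℕ) :
    m * (r / 2) ^ (m - 1) / 2 ≤ r ^ (m - 1) := by
  rcases m with _ | j
  · simp
  have h2 : ((j + 1 : ℕ) : ℝ) ≤ 2 ^ (j + 1) := mod_cast (Nat.lt_two_pow_self).le
  rw [Nat.add_sub_cancel, div_pow, mul_div_assoc', div_div, ← pow_succ,
    div_le_iff₀ (by positivity), mul_comm (r ^ j)]
  gcongr

lemma abs_besselTermDeriv_le {R x : ℝ} (hR : 1 ≤ R) (hx : |x| ≤ R) (n k : ℕ) :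
    |besselTermDeriv n k x| ≤ R ^ (2 * k + n) / k ! := by
  refine (abs_besselCoeff_mul_le n k _).trans ?_
  gcongr
  calc |((2 * k + n : ℕ) : ℝ) * (x / 2) ^ (2 * k + n - 1) / 2|
      = (2 * k + n : ℕ) * (|x| / 2) ^ (2 * k + n - 1) / 2 := by
        rw [abs_div, abs_mul, abs_pow, abs_div, Nat.abs_cast, abs_two]
    _ ≤ |x| ^ (2 * k + n - 1) := mul_half_pow_pred_div_two_le (abs_nonneg x) _
    _ ≤ R ^ (2 * k + n - 1) := by gcongr
    _ ≤ R ^ (2 * k + n) := pow_le_pow_right₀ hR (Nat.sub_le _ _)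

lemma summable_pow_two_mul_add_div_factorial (R : ℝ) (n : ℕ) :
    Summable fun k : ℕ => R ^ (2 * k + n) / k ! := by
  simpa [pow_add, pow_mul, mul_div_right_comm] using
    (Real.summable_pow_div_factorial (R ^ 2)).mul_right (R ^ n)

lemma summable_besselTerm (n : ℕ) (x : ℝ) : Summable fun k => besselTerm n k x :=
  (summable_pow_two_mul_add_div_factorial |x| n).of_norm_bounded
    fun k => abs_besselTerm_le le_rfl n k

lemma summable_besselTermDeriv (n : ℕ) (x : ℝ) : Summable fun k => besselTermDeriv n k x :=
  (summable_pow_two_mul_add_div_factorial (|x| + 1) n).of_norm_bounded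
    fun k => abs_besselTermDeriv_le (by linarith [abs_nonneg x]) (by linarith) n k

lemma hasDerivAt_besselJ (n : ℕ) (x : ℝ) :
    HasDerivAt (besselJ n) (∑' k, besselTermDeriv n k x) x := by
  set R := |x| + 1
  have hR : 1 ≤ R := by linarith [abs_nonneg x]
  have hball {y : ℝ} (hy : y ∈ Metric.ball 0 R) : |y| ≤ R := by
    simpa using (Metric.mem_ball.mp hy).le
  exact hasDerivAt_tsum_of_isPreconnected (summable_pow_two_mul_add_div_factorial R n)
    Metric.isOpen_ball (convex_ball 0 R).isPreconnected
    (fun k y _ => hasDerivAt_besselTerm n k y)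
    (fun k y hy => abs_besselTermDeriv_le hR (hball hy) n k)
    (Metric.mem_ball_self (by positivity)) (summable_besselTerm n 0)
    (by simp [R])

lemma continuous_besselJ (n : ℕ) : Continuous (besselJ n) :=
  continuous_iff_continuousAt.mpr fun x => (hasDerivAt_besselJ n x).continuousAt

lemma besselTermDeriv_zero_succ (k : ℕ) (x : ℝ) :
    besselTermDeriv 0 (k + 1) x = -besselTerm 1 k x := by
  have hk : (k ! : ℝ) ≠ 0 := mod_cast k.factorial_ne_zero
  simp only [besselTermDeriv, besselTerm, Nat.factorial_succ, add_zero,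
    show 2 * (k + 1) - 1 = 2 * k + 1 by omega]
  push_cast
  field_simp
  ring

lemma besselTermDeriv_one (k : ℕ) {x : ℝ} (hx : x ≠ 0) :
    besselTermDeriv 1 k x = besselTerm 0 k x - besselTerm 1 k x / x := by
  have hk : (k ! : ℝ) ≠ 0 := mod_cast k.factorial_ne_zero
  simp only [besselTermDeriv, besselTerm, Nat.factorial_succ, add_zero, Nat.add_sub_cancel,
    pow_succ]
  push_cast
  field_simp
  ring

lemma hasDerivAt_besselJ_zero (x : ℝ) : HasDerivAt (besselJ 0) (-besselJ 1 x) x := by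
  convert hasDerivAt_besselJ 0 x using 1
  rw [(summable_besselTermDeriv 0 x).tsum_eq_zero_add, besselJ_eq_tsum, ← tsum_neg]
  rw [tsum_congr fun k => besselTermDeriv_zero_succ k x]
  simp [besselTermDeriv]

lemma hasDerivAt_besselJ_one {x : ℝ} (hx : x ≠ 0) :
    HasDerivAt (besselJ 1) (besselJ 0 x - besselJ 1 x / x) x := by
  convert hasDerivAt_besselJ 1 x using 1
  rw [besselJ_eq_tsum, besselJ_eq_tsum, ← tsum_div_const,
    ← (summable_besselTerm 0 x).tsum_sub ((summable_besselTerm 1 x).div_const x)]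
  exact tsum_congr fun k => (besselTermDeriv_one k hx).symm

lemma hasDerivAt_besselJ_zero_sq_add_one_sq {x : ℝ} (hx : x ≠ 0) :
    HasDerivAt (fun y => besselJ 0 y ^ 2 + besselJ 1 y ^ 2) (-2 * besselJ 1 x ^ 2 / x) x := by
  refine (((hasDerivAt_besselJ_zero x).pow 2).add
    ((hasDerivAt_besselJ_one hx).pow 2)).congr_deriv ?_
  field_simp
  ring

lemma hasDerivAt_mul_log_sub_self_mul_besselJ_sq {x : ℝ} (hx : x ≠ 0) :
    HasDerivAt (fun y => (y * log y - y) * (besselJ 0 y ^ 2 + besselJ 1 y ^ 2))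
      (log x * besselJ 0 x ^ 2 - (log x - 2) * besselJ 1 x ^ 2) x := by
  have hg : HasDerivAt (fun y => y * log y - y) (log x) x :=
    ((hasDerivAt_mul_log hx).sub (hasDerivAt_id' x)).congr_deriv (by ring)
  refine (hg.mul (hasDerivAt_besselJ_zero_sq_add_one_sq hx)).congr_deriv ?_
  field_simp
  ring

theorem stmt3 :
    (∀ x : ℝ, 0 < x →
      HasDerivAt (fun y : ℝ => (y * Real.log y - y) * ((besselJ 0 y) ^ 2 + (besselJ 1 y) ^ 2))
        (Real.log x * (besselJ 0 x) ^ 2 - (Real.log x - 2) * (besselJ 1 x) ^ 2) x) ∧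
    (∀ a b : ℝ, 0 < a → a < b →
      ∫ x in a..b, Real.log x * (besselJ 0 x) ^ 2 =
        ((b * Real.log b - b) * ((besselJ 0 b) ^ 2 + (besselJ 1 b) ^ 2)
          - (a * Real.log a - a) * ((besselJ 0 a) ^ 2 + (besselJ 1 a) ^ 2))
        + ∫ x in a..b, (Real.log x - 2) * (besselJ 1 x) ^ 2) := by
  refine ⟨fun x hx => hasDerivAt_mul_log_sub_self_mul_besselJ_sq hx.ne', fun a b ha hab => ?_⟩
  have hne {x : ℝ} (hx : x ∈ Set.uIcc a b) : x ≠ 0 := by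
    rw [Set.uIcc_of_le hab.le] at hx
    exact (ha.trans_le hx.1).ne'
  have hlog : ContinuousOn log (Set.uIcc a b) := continuousOn_log.mono fun x hx => hne hx
  have hJ (n : ℕ) := (continuous_besselJ n).continuousOn (s := Set.uIcc a b)
  have hint₀ : IntervalIntegrable (fun x => log x * besselJ 0 x ^ 2) volume a b :=
    (hlog.mul ((hJ 0).pow 2)).intervalIntegrable
  have hint₁ : IntervalIntegrable (fun x => (log x - 2) * besselJ 1 x ^ 2) volume a b :=
    ((hlog.sub continuousOn_const).mul ((hJ 1).pow 2)).intervalIntegrable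
  have hftc := integral_eq_sub_of_hasDerivAt
    (fun x hx => hasDerivAt_mul_log_sub_self_mul_besselJ_sq (hne hx)) (hint₀.sub hint₁)
  rw [integral_sub hint₀ hint₁] at hftc
  linarith
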